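/- Let A ∈ ℂ^{n×n}, let 1 ≤ h < k ≤ n−1, and let G_h, …, G_k be Givens rotations (G_i acting on rows i and i+1 with parameters c_i ∈ ℝ, s_i ∈ ℂ, c_i^2 + |s_i|^2 = 1) such that s_i ≠ 0 for i = h,…,k. Set Q = G_h G_{h+1} ⋯ G_k and R = t(QAQ^*) − Q t(A) Q^*. Then there exist vectors a, b ∈ ℂ^n and d ∈ ℝ^n such that R = diag(d) + t(ab^*), where b_h = s_h s_{h+1} ⋯ s_k, b_i = c_{i−1} s_i s_{i+1} ⋯ s_k for i = h+1,…,k, and b_i = a_i = d_i = 0 for all i < h and all i > k+1. Moreover, if h > 1 then R e_1 = 0. -/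

import Mathlib

open Matrix BigOperators Finset

/-- The operator `t`: `t(A)_{ij} = A_{ij}` for `i > j`, `conj (A_{ji})` for
`i < j`, and `0` on the diagonal. -/
noncomputable def tOp {n : ℕ} (A : Matrix (Fin n) (Fin n) ℂ) :
    Matrix (Fin n) (Fin n) ℂ :=
  Matrix.of fun i j =>
    if j < i then A i j else if i < j then (starRingEnd ℂ) (A j i) else 0

/-- `G` is the Givens rotation acting on (0-indexed) rows `i` and `i+1` with
parameters `c ∈ ℝ`, `s ∈ ℂ`, `c² + |s|² = 1`. -/
def IsGivensAt {n : ℕ} (i : ℕ) (c : ℝ) (s : ℂ) (G : Matrix (Fin n) (Fin n) ℂ) : Prop :=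
  i + 1 < n ∧ c ^ 2 + ‖s‖ ^ 2 = 1 ∧
  ∀ p q : Fin n,
    G p q =
      if (p : ℕ) = i ∧ (q : ℕ) = i then (c : ℂ)
      else if (p : ℕ) = i ∧ (q : ℕ) = i + 1 then s
      else if (p : ℕ) = i + 1 ∧ (q : ℕ) = i then -((starRingEnd ℂ) s)
      else if (p : ℕ) = i + 1 ∧ (q : ℕ) = i + 1 then (c : ℂ)
      else if p = q then 1 else 0

/-- The ordered product `G a * G (a+1) * ⋯ * G b`. -/
noncomputable def rotProd {n : ℕ} (G : ℕ → Matrix (Fin n) (Fin n) ℂ) (a b : ℕ) :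
    Matrix (Fin n) (Fin n) ℂ :=
  ((List.range (b + 1 - a)).map (fun j => G (a + j))).prod

/-!
Put `U = A - t(A)`, an upper triangular matrix. Since `t` is the identity strictly below the
diagonal, `R = Q U Qᴴ` there, and `R` is Hermitian because `t` only takes Hermitian values; so `R`
is determined by its real diagonal and its strictly lower part.

Multiplying out the rotations gives `Q` explicitly: it is upper Hessenberg, acts as the identity
outside rows and columns `h, …, k + 1`, and on and above the diagonal its rows `h, …, k + 1` form
the rank-one matrix `b vᵀ` with `b` as in the statement and `v_q = c_q / (s_q ⋯ s_k)`; this is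
where `s_i ≠ 0` is needed. The product `Q U` is still upper Hessenberg, so for `j < i` the entries
`Q_{jl}` with `l < j` do not contribute to `(Q U Qᴴ)_{ij} = ∑ₗ (Q U)_{il} conj (Q_{jl})`, which
therefore equals `a_i conj (b_j)` with `a_i = ∑ₗ (Q U)_{il} conj (v_l)`.
-/

section tOp

variable {n : ℕ}

lemma tOp_apply_of_lt (X : Matrix (Fin n) (Fin n) ℂ) {i j : Fin n} (hji : j < i) :
    tOp X i j = X i j := by
  simp [tOp, hji]

lemma tOp_apply_of_gt (X : Matrix (Fin n) (Fin n) ℂ) {i j : Fin n} (hij : i < j) :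
    tOp X i j = starRingEnd ℂ (X j i) := by
  simp [tOp, hij, hij.not_gt]

lemma tOp_apply_self (X : Matrix (Fin n) (Fin n) ℂ) (i : Fin n) : tOp X i i = 0 := by
  simp [tOp]

lemma isHermitian_tOp (X : Matrix (Fin n) (Fin n) ℂ) : (tOp X).IsHermitian := by
  ext i j
  rcases lt_trichotomy i j with hij | rfl | hij
  · simp [tOp_apply_of_lt _ hij, tOp_apply_of_gt _ hij]
  · simp [tOp_apply_self]
  · simp [tOp_apply_of_lt _ hij, tOp_apply_of_gt _ hij]

lemma isUpperTriangular_sub_tOp (X : Matrix (Fin n) (Fin n) ℂ) :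
    (X - tOp X).IsUpperTriangular :=
  fun i j (hji : j < i) => by rw [Matrix.sub_apply, tOp_apply_of_lt _ hji, sub_self]

lemma Matrix.IsHermitian.eq_diagonal_add_tOp_vecMulVec {R : Matrix (Fin n) (Fin n) ℂ}
    (hR : R.IsHermitian) {a b : Fin n → ℂ}
    (hab : ∀ i j, j < i → R i j = a i * starRingEnd ℂ (b j)) :
    R = diagonal (fun i => ((R i i).re : ℂ)) + tOp (vecMulVec a fun j => starRingEnd ℂ (b j)) := by
  ext i j
  rcases lt_trichotomy i j with hij | rfl | hij
  · rw [add_apply, diagonal_apply_ne _ hij.ne, zero_add, tOp_apply_of_gt _ hij, vecMulVec_apply,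
      ← hab j i hij, ← hR.apply i j, starRingEnd_apply]
  · rw [add_apply, diagonal_apply_eq, tOp_apply_self, add_zero]
    exact (hR.coe_re_apply_self i).symm
  · rw [add_apply, diagonal_apply_ne _ hij.ne', zero_add, tOp_apply_of_lt _ hij, vecMulVec_apply,
      hab i j hij]

noncomputable def tOpResidual (Q A : Matrix (Fin n) (Fin n) ℂ) : Matrix (Fin n) (Fin n) ℂ :=
  tOp (Q * A * Qᴴ) - Q * tOp A * Qᴴ

variable (Q A : Matrix (Fin n) (Fin n) ℂ)

lemma isHermitian_tOpResidual : (tOpResidual Q A).IsHermitian :=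
  (isHermitian_tOp _).sub (isHermitian_mul_mul_conjTranspose Q (isHermitian_tOp A))

lemma tOpResidual_apply_of_lt {i j : Fin n} (hji : j < i) :
    tOpResidual Q A i j = (Q * (A - tOp A) * Qᴴ) i j := by
  rw [tOpResidual, Matrix.sub_apply, tOp_apply_of_lt _ hji, ← Matrix.sub_apply, mul_sub, sub_mul]

lemma tOpResidual_apply_self_of_row_eq {i : Fin n}
    (hQ : ∀ m, Q i m = if i = m then 1 else 0) : tOpResidual Q A i i = 0 := by
  simp [tOpResidual, tOp_apply_self, mul_apply, hQ]

end tOp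

section Hessenberg

variable {n : ℕ} {α : Type*} [NonUnitalNonAssocSemiring α]

def IsHessenbergOn (S : Set ℕ) (M : Matrix (Fin n) (Fin n) α) : Prop :=
  ∀ p q : Fin n, q < p → ¬((p : ℕ) = q + 1 ∧ (q : ℕ) ∈ S) → M p q = 0

lemma IsHessenbergOn.mul_isUpperTriangular {S : Set ℕ} {Q U : Matrix (Fin n) (Fin n) α}
    (hQ : IsHessenbergOn S Q) (hU : U.IsUpperTriangular) : IsHessenbergOn S (Q * U) := by
  intro p q hqp hpq
  rw [Matrix.mul_apply]
  refine sum_eq_zero fun m _ => ?_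
  rcases lt_or_ge q m with hqm | hmq
  · rw [hU hqm, mul_zero]
  · have hmp : ¬((p : ℕ) = m + 1 ∧ (m : ℕ) ∈ S) := fun ⟨hp, hm⟩ => by
      obtain rfl : m = q := Fin.ext (by have := Fin.lt_def.mp hqp; have := Fin.le_def.mp hmq; omega)
      exact hpq ⟨hp, hm⟩
    rw [hQ p m (lt_of_le_of_lt hmq hqp) hmp, zero_mul]

end Hessenberg

lemma IsGivensAt.mul_apply {n i : ℕ} {c : ℝ} {s : ℂ} {G : Matrix (Fin n) (Fin n) ℂ}
    (hG : IsGivensAt i c s G) (M : Matrix (Fin n) (Fin n) ℂ) (p q : Fin n) :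
    (M * G) p q =
      if (q : ℕ) = i then M p ⟨i, by have := hG.1; omega⟩ * c +
          M p ⟨i + 1, hG.1⟩ * -starRingEnd ℂ s
      else if (q : ℕ) = i + 1 then M p ⟨i, by have := hG.1; omega⟩ * s +
          M p ⟨i + 1, hG.1⟩ * c
      else M p q := by
  have hi : (⟨i, by have := hG.1; omega⟩ : Fin n) ≠ ⟨i + 1, hG.1⟩ := by simp [Fin.ext_iff]
  have hcol (m : Fin n) (hmq : m ≠ q)
      (hoff : (m : ℕ) = i ∨ (m : ℕ) = i + 1 → (q : ℕ) ≠ i ∧ (q : ℕ) ≠ i + 1) :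
      M p m * G m q = 0 := by
    rw [hG.2.2, if_neg, if_neg, if_neg, if_neg, if_neg hmq, mul_zero] <;> omega
  rw [Matrix.mul_apply]
  split_ifs with hq₁ hq₂
  · rw [Fintype.sum_eq_add _ _ hi fun m hm => hcol m ?_ ?_]
    · simp [hG.2.2, hq₁]
    · rintro rfl; exact hm.1 (Fin.ext hq₁)
    · simp only [ne_eq, Fin.ext_iff] at hm; omega
  · rw [Fintype.sum_eq_add _ _ hi fun m hm => hcol m ?_ ?_]
    · simp [hG.2.2, hq₂]
    · rintro rfl; exact hm.2 (Fin.ext hq₂)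
    · simp only [ne_eq, Fin.ext_iff] at hm; omega
  · rw [Fintype.sum_eq_single q fun m hm => hcol m hm fun _ => ⟨hq₁, hq₂⟩, hG.2.2]
    simp [hq₁, hq₂]

/-- Entry `(p, q)` of the product of the Givens rotations acting on rows `h, …, e`, in order;
for `e = h` it is the empty product. -/
noncomputable def givensProdEntry (h e : ℕ) (c : ℕ → ℝ) (s : ℕ → ℂ) (p q : ℕ) : ℂ :=
  if h ≤ p ∧ p ≤ e ∧ h ≤ q ∧ q ≤ e then
    if p ≤ q then
      (if p = h then 1 else (c (p - 1) : ℂ)) * (∏ m ∈ Ico p q, s m) *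
        (if q < e then (c q : ℂ) else 1)
    else if p = q + 1 then -starRingEnd ℂ (s q) else 0
  else if p = q then 1 else 0

section GivensProdEntry

variable {h e : ℕ} {c : ℕ → ℝ} {s : ℕ → ℂ}

lemma givensProdEntry_succ_self (hhe : h ≤ e) (p : ℕ) :
    givensProdEntry h (e + 1) c s p e =
      givensProdEntry h e c s p e * c e +
        givensProdEntry h e c s p (e + 1) * -starRingEnd ℂ (s e) := by
  unfold givensProdEntry
  split_ifs <;> first | omega | ring

lemma givensProdEntry_succ_succ (hhe : h ≤ e) (p : ℕ) :
    givensProdEntry h (e + 1) c s p (e + 1) =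
      givensProdEntry h e c s p e * s e + givensProdEntry h e c s p (e + 1) * c e := by
  unfold givensProdEntry
  split_ifs <;> first
    | omega
    | (rw [prod_Ico_succ_top (by omega)]; ring)
    | simp_all

lemma givensProdEntry_succ_of_ne {q : ℕ} (hq₁ : q ≠ e) (hq₂ : q ≠ e + 1) (p : ℕ) :
    givensProdEntry h (e + 1) c s p q = givensProdEntry h e c s p q := by
  unfold givensProdEntry
  split_ifs <;> first | omega | rfl

lemma givensProdEntry_of_lt {p q : ℕ} (hqp : q < p) (hpq : ¬(p = q + 1 ∧ q ∈ Set.Ico h e)) :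
    givensProdEntry h e c s p q = 0 := by
  rw [Set.mem_Ico] at hpq
  unfold givensProdEntry
  split_ifs <;> first | omega | rfl

lemma givensProdEntry_of_not_mem {p : ℕ} (hp : p < h ∨ e < p) (q : ℕ) :
    givensProdEntry h e c s p q = if p = q then 1 else 0 := by
  unfold givensProdEntry
  split_ifs <;> first | omega | rfl

lemma prod_givens_apply {n : ℕ} (G : ℕ → Matrix (Fin n) (Fin n) ℂ) (m : ℕ)
    (hG : ∀ j < m, IsGivensAt (h + j) (c (h + j)) (s (h + j)) (G (h + j))) (p q : Fin n) :
    ((List.range m).map fun j => G (h + j)).prod p q = givensProdEntry h (h + m) c s p q := by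
  induction m generalizing q with
  | zero =>
    simp only [List.range_zero, List.map_nil, List.prod_nil, one_apply, Fin.ext_iff, add_zero]
    unfold givensProdEntry
    split_ifs <;> first | omega | simp_all
  | succ m ih =>
    have ih' := ih fun j hj => hG j (by omega)
    rw [List.range_succ, List.map_append, List.prod_append, List.map_singleton,
      List.prod_singleton, (hG m m.lt_add_one).mul_apply, ih', ih', ih', ← add_assoc]
    split_ifs with hq₁ hq₂
    · rw [hq₁, givensProdEntry_succ_self (by omega)]
    · rw [hq₂, givensProdEntry_succ_succ (by omega)]
    · rw [givensProdEntry_succ_of_ne hq₁ hq₂]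

end GivensProdEntry

lemma rotProd_apply {n h k : ℕ} (hhk : h ≤ k + 1) (c : ℕ → ℝ) (s : ℕ → ℂ)
    (G : ℕ → Matrix (Fin n) (Fin n) ℂ)
    (hG : ∀ i, h ≤ i → i ≤ k → IsGivensAt i (c i) (s i) (G i)) (p q : Fin n) :
    rotProd G h k p q = givensProdEntry h (k + 1) c s p q := by
  have := prod_givens_apply G (k + 1 - h) (fun j _ => hG (h + j) (by omega) (by omega)) p q
  rwa [show h + (k + 1 - h) = k + 1 by omega] at this

section Factor

variable (h e : ℕ) (c : ℕ → ℝ) (s : ℕ → ℂ)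

noncomputable def givensRowFactor (p : ℕ) : ℂ :=
  if h ≤ p ∧ p ≤ e then (if p = h then 1 else (c (p - 1) : ℂ)) * ∏ m ∈ Ico p e, s m else 0

noncomputable def givensColFactor (q : ℕ) : ℂ :=
  if h ≤ q ∧ q ≤ e then (if q < e then (c q : ℂ) else 1) * (∏ m ∈ Ico q e, s m)⁻¹ else 0

variable {h e c s}

lemma givensRowFactor_of_not_mem {p : ℕ} (hp : p < h ∨ e < p) : givensRowFactor h e c s p = 0 :=
  if_neg (by omega)

lemma givensColFactor_of_lt {q : ℕ} (hq : e < q) : givensColFactor h e c s q = 0 :=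
  if_neg (by omega)

lemma givensProdEntry_eq_givensRowFactor_mul_givensColFactor
    (hs : ∀ i, h ≤ i → i < e → s i ≠ 0) {p q : ℕ} (hp : h ≤ p) (hpe : p ≤ e) (hpq : p ≤ q) :
    givensProdEntry h e c s p q = givensRowFactor h e c s p * givensColFactor h e c s q := by
  by_cases hqe : q ≤ e
  · have hsplit : ∏ m ∈ Ico p e, s m = (∏ m ∈ Ico p q, s m) * ∏ m ∈ Ico q e, s m :=
      (prod_Ico_consecutive _ hpq hqe).symm
    have hne : ∏ m ∈ Ico q e, s m ≠ 0 :=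
      prod_ne_zero_iff.mpr fun m hm => by have := mem_Ico.mp hm; exact hs m (by omega) (by omega)
    unfold givensProdEntry givensRowFactor givensColFactor
    rw [if_pos (show h ≤ p ∧ p ≤ e ∧ h ≤ q ∧ q ≤ e by omega), if_pos hpq,
      if_pos (show h ≤ p ∧ p ≤ e by omega), if_pos (show h ≤ q ∧ q ≤ e by omega), hsplit]
    field_simp
  · unfold givensProdEntry givensColFactor
    rw [if_neg (by omega), if_neg (by omega), if_neg (by omega), mul_zero]

end Factor

section LowerPart

variable {n h e : ℕ} {c : ℕ → ℝ} {s : ℕ → ℂ}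

/-- Set to `0` above row `h`, as the theorem demands; these rows only meet columns `j < h`, where
`givensRowFactor` vanishes. -/
noncomputable def lowerLeftFactor (h e : ℕ) (c : ℕ → ℝ) (s : ℕ → ℂ)
    (M : Matrix (Fin n) (Fin n) ℂ) (i : Fin n) : ℂ :=
  if h ≤ (i : ℕ) then ∑ l, M i l * starRingEnd ℂ (givensColFactor h e c s l) else 0

variable {M : Matrix (Fin n) (Fin n) ℂ} (hM : IsHessenbergOn (Set.Ico h e) M)
include hM

lemma lowerLeftFactor_of_lt {i : Fin n} (hi : e < (i : ℕ)) : lowerLeftFactor h e c s M i = 0 := by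
  rw [lowerLeftFactor]
  split_ifs
  · refine sum_eq_zero fun l _ => ?_
    rcases lt_or_ge l i with hli | hil
    · rw [hM i l hli (by simp only [Set.mem_Ico]; omega), zero_mul]
    · rw [givensColFactor_of_lt (by simp only [Fin.le_def] at hil; omega), map_zero, mul_zero]
  · rfl

lemma mul_conjTranspose_apply_of_lt {Q : Matrix (Fin n) (Fin n) ℂ}
    (hQ : ∀ p q : Fin n, Q p q = givensProdEntry h e c s p q)
    (hs : ∀ i, h ≤ i → i < e → s i ≠ 0) {i j : Fin n} (hji : j < i) :
    (M * Qᴴ) i j = lowerLeftFactor h e c s M i * starRingEnd ℂ (givensRowFactor h e c s j) := by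
  have hji' := Fin.lt_def.mp hji
  simp only [mul_apply, conjTranspose_apply, ← starRingEnd_apply, hQ j]
  by_cases hj : h ≤ (j : ℕ) ∧ (j : ℕ) ≤ e
  · rw [lowerLeftFactor, if_pos (by omega), sum_mul]
    refine sum_congr rfl fun l _ => ?_
    rcases lt_or_ge l j with hlj | hjl
    · rw [hM i l (hlj.trans hji) (by have := Fin.lt_def.mp hlj; omega)]
      simp only [zero_mul]
    · rw [givensProdEntry_eq_givensRowFactor_mul_givensColFactor hs hj.1 hj.2 hjl, map_mul]
      ring
  · rw [givensRowFactor_of_not_mem (by omega), map_zero, mul_zero]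
    refine sum_eq_zero fun l _ => ?_
    rw [givensProdEntry_of_not_mem (by omega)]
    split_ifs with hjl
    · rw [← Fin.ext hjl, hM i j hji (by simp only [Set.mem_Ico]; omega), zero_mul]
    · rw [map_zero, mul_zero]

end LowerPart

/-- Theorem 2.5 of the paper (0-indexed: the rotations act on rows `h, …, k`
and `k+1`, i.e. 1-indexed rows `h+1, …, k+2`).  The residual
`R = t(QAQᴴ) - Q t(A) Qᴴ` equals `diag d + t(abᴴ)` where `b` does not
depend on `A`: `b_h = s_h ⋯ s_k`, `b_i = c_{i-1} s_i ⋯ s_k` for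
`h+1 ≤ i ≤ k`, and `a_i = b_i = d_i = 0` for `i < h` or `i > k+1`.
Moreover if `h > 0` then the first column of `R` vanishes (`R e₁ = 0`). -/
theorem stmt_10 (n h k : ℕ) (hhk : h < k) (hk : k + 1 < n)
    (c : ℕ → ℝ) (s : ℕ → ℂ) (G : ℕ → Matrix (Fin n) (Fin n) ℂ)
    (hG : ∀ i, h ≤ i → i ≤ k → IsGivensAt i (c i) (s i) (G i))
    (hs : ∀ i, h ≤ i → i ≤ k → s i ≠ 0)
    (A : Matrix (Fin n) (Fin n) ℂ) :
    let Q := rotProd G h k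
    let R := tOp (Q * A * Qᴴ) - Q * tOp A * Qᴴ
    ∃ (a b : Fin n → ℂ) (d : Fin n → ℝ),
      R = Matrix.diagonal (fun i => (d i : ℂ)) +
          tOp (Matrix.vecMulVec a (fun j => (starRingEnd ℂ) (b j))) ∧
      (∀ i : Fin n, (i : ℕ) = h → b i = ∏ j ∈ Finset.Icc h k, s j) ∧
      (∀ i : Fin n, h + 1 ≤ (i : ℕ) → (i : ℕ) ≤ k →
        b i = ((c ((i : ℕ) - 1) : ℂ)) * ∏ j ∈ Finset.Icc (i : ℕ) k, s j) ∧
      (∀ i : Fin n, ((i : ℕ) < h ∨ k + 1 < (i : ℕ)) → b i = 0 ∧ a i = 0 ∧ d i = 0) ∧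
      (0 < h → ∀ p : Fin n, R p ⟨0, by omega⟩ = 0) := by
  intro Q R
  have hQ (p q : Fin n) : Q p q = givensProdEntry h (k + 1) c s p q :=
    rotProd_apply (by omega) c s G hG p q
  have hQU : IsHessenbergOn (Set.Ico h (k + 1)) (Q * (A - tOp A)) :=
    IsHessenbergOn.mul_isUpperTriangular
      (fun p q hqp hpq => (hQ p q).trans (givensProdEntry_of_lt hqp hpq))
      (isUpperTriangular_sub_tOp A)
  set a := lowerLeftFactor h (k + 1) c s (Q * (A - tOp A))
  set b : Fin n → ℂ := fun i => givensRowFactor h (k + 1) c s i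
  have hlower (i j : Fin n) (hji : j < i) : R i j = a i * starRingEnd ℂ (b j) :=
    (tOpResidual_apply_of_lt Q A hji).trans
      (mul_conjTranspose_apply_of_lt hQU hQ (fun i hi hik => hs i hi (by omega)) hji)
  have hdiag (i : Fin n) (hi : (i : ℕ) < h ∨ k + 1 < i) : R i i = 0 :=
    tOpResidual_apply_self_of_row_eq Q A fun m => by
      simp only [hQ, givensProdEntry_of_not_mem hi, Fin.val_inj]
  refine ⟨a, b, fun i => (R i i).re,
    (isHermitian_tOpResidual Q A).eq_diagonal_add_tOp_vecMulVec hlower, fun i hi => ?_,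
    fun i hi hik => ?_, fun i hi => ⟨givensRowFactor_of_not_mem hi, ?_, by simp [hdiag i hi]⟩,
    fun hh p => ?_⟩
  · simp [b, givensRowFactor, hi, Ico_add_one_right_eq_Icc, show h ≤ k + 1 by omega]
  · simp [b, givensRowFactor, Ico_add_one_right_eq_Icc, show h ≤ (i : ℕ) by omega,
      show (i : ℕ) ≤ k + 1 by omega, show (i : ℕ) ≠ h by omega]
  · rcases hi with hi | hi
    · exact if_neg (by omega)
    · exact lowerLeftFactor_of_lt hQU hi
  · rcases Nat.eq_zero_or_pos p with hp | hp
    · rw [show (⟨0, by omega⟩ : Fin n) = p from Fin.ext hp.symm]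
      exact hdiag p (by omega)
    · rw [hlower p _ hp]
      simp [b, givensRowFactor_of_not_mem (Or.inl hh)]
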